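/- Let n and k be positive integers with gcd(k,n) = 1, let a_{ij} ∈ F_{2^n} for 0 ≤ i < j ≤ n−1, and let G(x) = x^{2^{2k}+2^k+1} + Σ_{0 ≤ i < j ≤ n−1} a_{ij} x^{2^i+2^j} as a function on F_{2^n}. If n is odd then DLU_G ≤ 2^{(n+1)/2}, and if n is even then DLU_G ≤ 2^{n/2+1}. -/

import Mathlib

open scoped BigOperators Classical

noncomputable instance (p n : ℕ) [Fact p.Prime] : Fintype (GaloisField p n) :=
  Fintype.ofFinite _

/-- The absolute trace map from `F_{2^n}` to `F_2`. -/
noncomputable def trF2 (n : ℕ) (x : GaloisField 2 n) : ZMod 2 :=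
  Algebra.trace (ZMod 2) (GaloisField 2 n) x

/-- The binary Kloosterman sum `K_m(γ) = Σ_x (-1)^{Tr(γx + x⁻¹)}` (with `0⁻¹ = 0`). -/
noncomputable def kloo (m : ℕ) (γ : GaloisField 2 m) : ℤ :=
  ∑ x : GaloisField 2 m, (-1 : ℤ) ^ (trF2 m (γ * x + x⁻¹)).val

/-- The DLCT entry of `F : F_{2^n} → F_{2^n}` at `(u,v)`. -/
noncomputable def dlct (n : ℕ) (F : GaloisField 2 n → GaloisField 2 n)
    (u v : GaloisField 2 n) : ℤ :=
  (Nat.card {x : GaloisField 2 n // trF2 n (v * (F (x + u) + F x)) = 0} : ℤ) - 2 ^ (n - 1)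

/-- The differential-linear uniformity of `F`: the max of `|DLCT_F(u,v)|` over nonzero `u, v`. -/
noncomputable def dlu (n : ℕ) (F : GaloisField 2 n → GaloisField 2 n) : ℕ :=
  Finset.sup
    (Finset.univ.filter fun p : GaloisField 2 n × GaloisField 2 n => p.1 ≠ 0 ∧ p.2 ≠ 0)
    (fun p => (dlct n F p.1 p.2).natAbs)

/-!
For `u, v ≠ 0` the Boolean function `f x = Tr (v (G (x + u) + G x))` is quadratic, because `G` has
algebraic degree three: its polar form is `Tr (x ^ 2 ^ (2k) · N w)`, where `N` is a
`2 ^ k`-linearized polynomial of `2 ^ k`-degree four with nonzero leading coefficient. Hence the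
square of the Walsh sum `∑ (-1) ^ f x = 2 DLCT_G(u, v)` is either `0` or `2 ^ n · #ker N`. As
`gcd(k, n) = 1`, the fixed field of `x ↦ x ^ 2 ^ k` is `F_2`, so `#ker N = 2 ^ m` with `m ≤ 4`, and
`DLCT_G(u, v) ^ 2 = 2 ^ (n + m - 2)`; the parity of `n + m` then gives the two bounds.
-/

open Finset fwdDiff

section QuadraticFunction

variable {V : Type*} [Fintype V]

noncomputable def signChar : AddChar (ZMod 2) ℤ :=
  AddChar.zmodChar 2 (by norm_num : (-1 : ℤ) ^ 2 = 1)

lemma signChar_eq_ite (z : ZMod 2) : signChar z = if z = 0 then 1 else -1 := by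
  rw [signChar, AddChar.zmodChar_apply]
  split_ifs with h
  · simp [h]
  · rw [← ZMod.val_eq_zero] at h
    have := ZMod.val_lt z
    simp [show z.val = 1 by omega]

lemma signChar_eq_one_iff (z : ZMod 2) : signChar z = 1 ↔ z = 0 := by
  rw [signChar_eq_ite]
  split_ifs with h <;> simp [h]

lemma sum_signChar_eq (f : V → ZMod 2) :
    ∑ x, signChar (f x) = 2 * #{x | f x = 0} - Fintype.card V := by
  have := card_filter_add_card_filter_not (s := univ) (fun x => f x = 0)
  simp only [signChar_eq_ite, sum_ite, sum_const, card_univ] at this ⊢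
  push_cast [← this]
  ring

variable [AddCommGroup V]

lemma sum_signChar_eq_ite [DecidableEq V] (φ : V →+ ZMod 2) :
    ∑ x, signChar (φ x) = if φ = 0 then (Fintype.card V : ℤ) else 0 := by
  have hψ : signChar.compAddMonoidHom φ = 0 ↔ φ = 0 := by
    simp [signChar_eq_one_iff, DFunLike.ext_iff]
  simpa [hψ] using AddChar.sum_eq_ite (signChar.compAddMonoidHom φ)

lemma signChar_add_eq_sub (a b : ZMod 2) : signChar (a + b) = signChar (b - a) := by
  rw [CharTwo.sub_eq_add, add_comm]

theorem sq_sum_signChar_eq_zero_or (f : V → ZMod 2) (B : V → V →+ ZMod 2) (H : AddSubgroup V)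
    (hf : ∀ w x, Δ_[w] f x = Δ_[w] f 0 + B w x) (hH : ∀ w, w ∈ H ↔ B w = 0) :
    (∑ x, signChar (f x)) ^ 2 = 0 ∨
      (∑ x, signChar (f x)) ^ 2 = Fintype.card V * Nat.card H := by
  classical
  have hsq : (∑ x, signChar (f x)) ^ 2 =
      Fintype.card V * ∑ w : H, signChar (Δ_[(w : V)] f 0) := by
    calc (∑ x, signChar (f x)) ^ 2
        = ∑ w, ∑ x, signChar (f x) * signChar (f (x + w)) := by
          rw [sq, sum_mul_sum]
          refine (sum_congr rfl fun x _ => ?_).trans sum_comm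
          exact (Fintype.sum_equiv (Equiv.addLeft x) _ _ fun w => rfl).symm
      _ = ∑ w, ∑ x, signChar (Δ_[w] f x) := by
          simp only [← AddChar.map_add_eq_mul, signChar_add_eq_sub]
          rfl
      _ = ∑ w, signChar (Δ_[w] f 0) * ∑ x, signChar (B w x) := by
          refine sum_congr rfl fun w _ => ?_
          rw [mul_sum]
          exact sum_congr rfl fun x _ => by rw [hf w x, AddChar.map_add_eq_mul]
      _ = Fintype.card V * ∑ w : H, signChar (Δ_[(w : V)] f 0) := by
          simp only [sum_signChar_eq_ite, ← hH, mul_ite, mul_zero]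
          rw [← sum_filter, sum_subtype (p := (· ∈ H)) _ (fun w => by simp), ← sum_mul, mul_comm]
  let g : H →+ ZMod 2 := AddMonoidHom.mk' (fun w => Δ_[(w : V)] f 0) fun w₁ w₂ => by
    have := hf w₂ w₁
    rw [(hH w₂).1 w₂.2, AddMonoidHom.zero_apply, add_zero] at this
    simp only [fwdDiff, zero_add, AddSubgroup.coe_add] at this ⊢
    linear_combination this
  rw [hsq, show ∑ w : H, signChar (Δ_[(w : V)] f 0) = ∑ w, signChar (g w) from rfl,
    sum_signChar_eq_ite g, Nat.card_eq_fintype_card]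
  split_ifs
  · exact Or.inr rfl
  · exact Or.inl (mul_zero _)

end QuadraticFunction

section LinearizedPolynomial

variable {K : Type*} [Field K] (σ : K →+* K)

def linearizedPoly (d : ℕ) (c : ℕ → K) : K →+ K where
  toFun x := ∑ i ∈ range (d + 1), c i * (σ ^ i) x
  map_zero' := by simp
  map_add' x y := by simp only [map_add, mul_add, sum_add_distrib]

@[simp] lemma linearizedPoly_apply (d : ℕ) (c : ℕ → K) (x : K) :
    linearizedPoly σ d c x = ∑ i ∈ range (d + 1), c i * (σ ^ i) x := rfl

lemma linearizedPoly_succ (d : ℕ) (c : ℕ → K) (x : K) :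
    linearizedPoly σ (d + 1) c x = linearizedPoly σ d c x + c (d + 1) * (σ ^ (d + 1)) x := by
  simp only [linearizedPoly_apply, sum_range_succ _ (d + 1)]

lemma linearizedPoly_update (d : ℕ) (c : ℕ → K) (b x : K) :
    linearizedPoly σ d (Function.update c d b) x =
      linearizedPoly σ d c x + (b - c d) * (σ ^ d) x := by
  cases d with
  | zero => simp only [linearizedPoly_apply, zero_add, sum_range_one, Function.update_self]; ring
  | succ d =>
    simp only [linearizedPoly_succ, Function.update_self]
    have : linearizedPoly σ d (Function.update c (d + 1) b) x = linearizedPoly σ d c x := by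
      simp only [linearizedPoly_apply]
      refine sum_congr rfl fun i hi => ?_
      rw [Function.update_of_ne (by rw [mem_range] at hi; omega)]
    rw [this]
    ring

/-- Right division by the degree-one operator `σ - a`. -/
lemma exists_linearizedPoly_succ_eq (a : K) (d : ℕ) (c : ℕ → K) :
    ∃ (c' : ℕ → K) (r : K), c' d = c (d + 1) ∧
      ∀ x, linearizedPoly σ (d + 1) c x = linearizedPoly σ d c' (σ x - a * x) + r * x := by
  induction d generalizing c with
  | zero =>
    refine ⟨fun _ => c 1, c 0 + c 1 * a, rfl, fun x => ?_⟩
    simp only [linearizedPoly_apply, sum_range_succ, sum_range_zero, pow_zero, pow_one, zero_add,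
      RingHom.coe_one, id]
    ring
  | succ d ih =>
    obtain ⟨c', r, hc', h⟩ :=
      ih (Function.update c (d + 1) (c (d + 1) + c (d + 2) * (σ ^ (d + 1)) a))
    refine ⟨Function.update c' (d + 1) (c (d + 2)), r, Function.update_self .., fun x => ?_⟩
    have hx := h x
    rw [linearizedPoly_update] at hx
    have hσ : (σ ^ (d + 1)) (σ x - a * x) =
        (σ ^ (d + 2)) x - (σ ^ (d + 1)) a * (σ ^ (d + 1)) x := by
      rw [map_sub, map_mul, pow_succ σ (d + 1)]
      rfl
    rw [linearizedPoly_succ σ (d + 1) c, linearizedPoly_update, linearizedPoly_succ σ d c', hσ]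
    linear_combination hx

/-- Coefficients of the `σ`-linearized polynomial whose kernel, for `σ = (· ^ 2 ^ k)` and
`G = cubicPlusQuadratic n k a`, is the radical of the quadratic function
`x ↦ Tr (v (G (x + u) + G x))`. -/
def radicalCoeff (u v : K) : ℕ → K
  | 0 => v * σ u
  | 1 => v * u + σ v * (σ ^ 3) u
  | 3 => σ v * σ u + (σ ^ 2) v * (σ ^ 4) u
  | 4 => (σ ^ 2) v * (σ ^ 3) u
  | _ => 0

lemma linearizedPoly_radicalCoeff (u v w : K) :
    linearizedPoly σ 4 (radicalCoeff σ u v) w =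
      v * (σ u * w + u * σ w) + σ (v * ((σ ^ 2) u * w + u * (σ ^ 2) w)) +
        (σ ^ 2) (v * ((σ ^ 2) u * σ w + σ u * (σ ^ 2) w)) := by
  simp only [linearizedPoly_apply, sum_range_succ, sum_range_zero, radicalCoeff, RingHom.coe_pow,
    Function.iterate_succ_apply', Function.iterate_zero_apply, map_add, map_mul]
  ring

variable [Fintype K] [DecidableEq K]

lemma card_fiber_le_card_ker {G H : Type*} [AddGroup G] [Fintype G] [AddGroup H] [DecidableEq H]
    (g : G →+ H) (y : H) : #{x | g x = y} ≤ #{x | g x = 0} := by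
  by_cases hy : y ∈ Set.range g
  · exact (AddMonoidHom.card_fiber_eq_of_mem_range g hy ⟨0, map_zero g⟩).le
  · rw [filter_false_of_mem fun x _ hx => hy ⟨x, hx⟩, card_empty]
    exact Nat.zero_le _

lemma card_ker_sub_mul_le {v : K} (hv : v ≠ 0) :
    #{x | σ x - σ v / v * x = 0} ≤ #{x | σ x = x} := by
  refine card_le_card_of_injOn (· / v) (fun x hx => ?_) fun x _ y _ h => (div_left_inj' hv).1 h
  have hσv : σ v ≠ 0 := (map_ne_zero σ).2 hv
  simp only [coe_filter, mem_univ, true_and, Set.mem_ofPred, sub_eq_zero] at hx ⊢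
  rw [map_div₀, hx]
  field_simp

/-- Factor out `σ - σ v / v` for a nonzero root `v`; its kernel is `v` times the fixed points
of `σ`. -/
theorem card_linearizedPoly_ker_le (d : ℕ) (c : ℕ → K) (hc : c d ≠ 0) :
    #{x | linearizedPoly σ d c x = 0} ≤ #{x | σ x = x} ^ d := by
  induction d generalizing c with
  | zero =>
    refine (card_le_one.2 fun x hx y hy => ?_).trans (pow_zero _).ge
    simp only [mem_filter, mem_univ, true_and, linearizedPoly_apply, zero_add, sum_range_one,
      pow_zero, RingHom.coe_one, id, mul_eq_zero, hc, false_or] at hx hy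
    rw [hx, hy]
  | succ d ih =>
    by_cases hker : ∀ v, linearizedPoly σ (d + 1) c v = 0 → v = 0
    · refine (card_le_one.2 fun x hx y hy => ?_).trans
        (Nat.one_le_pow _ _ (card_pos.2 ⟨0, by simp⟩))
      simp only [mem_filter, mem_univ, true_and] at hx hy
      rw [hker x hx, hker y hy]
    push Not at hker
    obtain ⟨v, hv, hv0⟩ := hker
    obtain ⟨c', r, hc', hdiv⟩ := exists_linearizedPoly_succ_eq σ (σ v / v) d c
    let g : K →+ K := σ.toAddMonoidHom - AddMonoidHom.mulLeft (σ v / v)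
    have hr : r = 0 := by
      have := hdiv v
      rw [hv, div_mul_cancel₀ _ hv0, sub_self, map_zero, zero_add] at this
      exact (mul_eq_zero.1 this.symm).resolve_right hv0
    have hL : ∀ x, linearizedPoly σ (d + 1) c x = linearizedPoly σ d c' (g x) := fun x => by
      rw [hdiv, hr, zero_mul, add_zero]
      rfl
    calc #{x | linearizedPoly σ (d + 1) c x = 0}
        ≤ #{x | g x = 0} * #{y | linearizedPoly σ d c' y = 0} := by
          refine card_le_mul_card_image_of_maps_to (f := g) (fun x hx => ?_) _ fun y _ =>
            (card_le_card fun x hx => ?_).trans (card_fiber_le_card_ker g y)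
          · simp only [mem_filter, mem_univ, true_and, hL] at hx ⊢
            exact hx
          · simp only [mem_filter, mem_univ, true_and] at hx ⊢
            exact hx.2
      _ ≤ #{x | σ x = x} * #{x | σ x = x} ^ d :=
          Nat.mul_le_mul (card_ker_sub_mul_le σ hv0) (ih c' (hc' ▸ hc))
      _ = #{x | σ x = x} ^ (d + 1) := (pow_succ' _ _).symm

end LinearizedPolynomial

section ThirdDifference

variable {R F : Type*} [CommRing R] [FunLike F R R] [AddMonoidHomClass F R R]

lemma fwdDiff_fwdDiff_fwdDiff_mul_mul (φ ψ ρ : F) (u w x : R) :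
    Δ_[x] (Δ_[w] (Δ_[u] fun y => φ y * ψ y * ρ y)) 0 =
      φ u * (ψ w * ρ x + ψ x * ρ w) + φ w * (ψ u * ρ x + ψ x * ρ u) +
        φ x * (ψ u * ρ w + ψ w * ρ u) := by
  simp only [fwdDiff, map_add, map_zero]
  ring

lemma fwdDiff_fwdDiff_fwdDiff_mul (φ ψ : F) (u w x : R) :
    Δ_[x] (Δ_[w] (Δ_[u] fun y => φ y * ψ y)) = 0 := by
  funext y
  simp only [fwdDiff, map_add, Pi.zero_apply]
  ring

end ThirdDifference

section GaloisField

variable {n : ℕ}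

lemma card_galoisField_two (hn : n ≠ 0) : Fintype.card (GaloisField 2 n) = 2 ^ n := by
  rw [← Nat.card_eq_fintype_card, GaloisField.card 2 n hn]

lemma trF2_iterateFrobenius (j : ℕ) (x : GaloisField 2 n) :
    trF2 n (iterateFrobenius (GaloisField 2 n) 2 j x) = trF2 n x := by
  have := Algebra.trace_eq_of_algEquiv
    (FiniteField.frobeniusAlgEquivOfAlgebraic (ZMod 2) (GaloisField 2 n) ^ j) x
  rwa [AlgEquiv.coe_pow, FiniteField.coe_frobeniusAlgEquivOfAlgebraic_iterate, ZMod.card] at this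

lemma eq_zero_of_trF2_mul_eq_zero {z : GaloisField 2 n} (h : ∀ y, trF2 n (y * z) = 0) : z = 0 :=
  (traceForm_nondegenerate (ZMod 2) (GaloisField 2 n)).1 z fun y => by
    simpa [trF2, Algebra.traceForm_apply, mul_comm] using h y

lemma two_mul_dlct_eq_sum_signChar (hn : n ≠ 0) (F : GaloisField 2 n → GaloisField 2 n)
    (u v : GaloisField 2 n) :
    2 * dlct n F u v = ∑ x, signChar (trF2 n (v * (F (x + u) + F x))) := by
  have h2n : (2 : ℤ) ^ n = 2 * 2 ^ (n - 1) := by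
    rw [← pow_succ']
    congr 1
    omega
  rw [sum_signChar_eq, card_galoisField_two hn, dlct, Nat.card_eq_fintype_card,
    Fintype.card_subtype]
  push_cast
  rw [h2n]
  ring

noncomputable def cubicPlusQuadratic (n k : ℕ) (a : ℕ → ℕ → GaloisField 2 n)
    (x : GaloisField 2 n) : GaloisField 2 n :=
  x ^ (2 ^ (2 * k) + 2 ^ k + 1) +
    ∑ p ∈ (Finset.range n ×ˢ Finset.range n).filter (fun p => p.1 < p.2),
      a p.1 p.2 * x ^ (2 ^ p.1 + 2 ^ p.2)

variable (k : ℕ)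

local notation "φ" => iterateFrobenius (GaloisField 2 n) 2 k

lemma card_fixedPoints_iterateFrobenius_le (hn : n ≠ 0) (hk : Nat.Coprime k n) :
    #{x : GaloisField 2 n | φ x = x} ≤ 2 := by
  have hper : ∀ j (x : GaloisField 2 n), iterateFrobenius _ 2 j x = x ↔
      Function.IsPeriodicPt (frobenius (GaloisField 2 n) 2) j x := fun j x => by
    rw [iterateFrobenius_def, Function.IsPeriodicPt, Function.IsFixedPt, iterate_frobenius]
  refine (card_le_card fun x hx => ?_).trans (card_le_two (a := (0 : GaloisField 2 n)) (b := 1))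
  rw [mem_filter] at hx
  have hxn : iterateFrobenius _ 2 n x = x := by
    rw [iterateFrobenius_def, ← card_galoisField_two hn, FiniteField.pow_card]
  have hx1 := ((hper k x).1 hx.2).gcd ((hper n x).1 hxn)
  rw [hk.gcd_eq_one, Function.IsPeriodicPt, Function.IsFixedPt, Function.iterate_one,
    frobenius_def] at hx1
  rcases mul_eq_zero.1 (show x * (x - 1) = 0 by linear_combination hx1) with h | h
  · simp [h]
  · simp [sub_eq_zero.1 h]

lemma fwdDiff_fwdDiff_fwdDiff_cubicPlusQuadratic (a : ℕ → ℕ → GaloisField 2 n)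
    (u w x : GaloisField 2 n) :
    Δ_[x] (Δ_[w] (Δ_[u] (cubicPlusQuadratic n k a))) 0 =
      (φ ^ 2) u * (φ w * x + φ x * w) + (φ ^ 2) w * (φ u * x + φ x * u) +
        (φ ^ 2) x * (φ u * w + φ w * u) := by
  have hφ2 : ∀ y, (φ ^ 2) y = y ^ 2 ^ (2 * k) := fun y => by
    rw [two_mul, pow_add, pow_mul, sq]
    rfl
  have hG : cubicPlusQuadratic n k a = (fun y => (φ ^ 2) y * φ y * RingHom.id _ y) +
      ∑ p ∈ (Finset.range n ×ˢ Finset.range n).filter (fun p => p.1 < p.2),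
        a p.1 p.2 • fun y => iterateFrobenius _ 2 p.1 y * iterateFrobenius _ 2 p.2 y := by
    funext y
    simp only [cubicPlusQuadratic, Pi.add_apply, Finset.sum_apply, Pi.smul_apply, smul_eq_mul,
      RingHom.id_apply, hφ2, iterateFrobenius_def, pow_add, pow_one]
  rw [hG]
  simp only [fwdDiff_add, fwdDiff_finsetSum, fwdDiff_const_smul, fwdDiff_fwdDiff_fwdDiff_mul,
    smul_zero, sum_const_zero, add_zero, Pi.add_apply, Pi.zero_apply]
  exact fwdDiff_fwdDiff_fwdDiff_mul_mul (φ ^ 2) φ (RingHom.id _) u w x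

/-- The trace form of the third difference, moved onto `(φ ^ 2) x` by Frobenius invariance of the
trace. -/
lemma trF2_mul_fwdDiff_fwdDiff_fwdDiff_cubicPlusQuadratic (a : ℕ → ℕ → GaloisField 2 n)
    (u v w x : GaloisField 2 n) :
    trF2 n (v * Δ_[x] (Δ_[w] (Δ_[u] (cubicPlusQuadratic n k a))) 0) =
      trF2 n ((φ ^ 2) x * linearizedPoly φ 4 (radicalCoeff φ u v) w) := by
  have htr : ∀ z, trF2 n ((φ ^ 2) z) = trF2 n z := fun z => by
    rw [sq, RingHom.coe_mul, Function.comp_apply, trF2_iterateFrobenius, trF2_iterateFrobenius]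
  rw [fwdDiff_fwdDiff_fwdDiff_cubicPlusQuadratic]
  calc _ = trF2 n ((φ ^ 2) x * (v * (φ u * w + u * φ w))) +
        trF2 n (φ x * (v * ((φ ^ 2) u * w + u * (φ ^ 2) w))) +
          trF2 n (x * (v * ((φ ^ 2) u * φ w + φ u * (φ ^ 2) w))) := by
        simp only [trF2, ← map_add]
        congr 1
        ring
    _ = trF2 n ((φ ^ 2) x * (v * (φ u * w + u * φ w))) +
        trF2 n ((φ ^ 2) x * φ (v * ((φ ^ 2) u * w + u * (φ ^ 2) w))) +
          trF2 n ((φ ^ 2) x * (φ ^ 2) (v * ((φ ^ 2) u * φ w + φ u * (φ ^ 2) w))) := by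
        rw [← htr (x * _), ← trF2_iterateFrobenius k (φ x * _), map_mul (φ ^ 2), map_mul φ]
        rfl
    _ = _ := by
        simp only [trF2, ← map_add, linearizedPoly_radicalCoeff, mul_add]

lemma fwdDiff_trF2_mul_add (F : GaloisField 2 n → GaloisField 2 n) (u v w x : GaloisField 2 n) :
    Δ_[w] (fun y => trF2 n (v * (F (y + u) + F y))) x =
      Δ_[w] (fun y => trF2 n (v * (F (y + u) + F y))) 0 +
        trF2 n (v * Δ_[x] (Δ_[w] (Δ_[u] F)) 0) := by
  simp only [← CharTwo.sub_eq_add (F _), fwdDiff, zero_add, trF2, mul_sub, map_sub]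
  ring

theorem exists_sq_two_mul_dlct_cubicPlusQuadratic (hn : n ≠ 0) (hk : Nat.Coprime k n)
    (a : ℕ → ℕ → GaloisField 2 n) {u v : GaloisField 2 n} (hu : u ≠ 0) (hv : v ≠ 0) :
    ∃ m ≤ 4, (2 * dlct n (cubicPlusQuadratic n k a) u v) ^ 2 = 0 ∨
      (2 * dlct n (cubicPlusQuadratic n k a) u v) ^ 2 = 2 ^ n * 2 ^ m := by
  set N := linearizedPoly φ 4 (radicalCoeff φ u v)
  let B : GaloisField 2 n → GaloisField 2 n →+ ZMod 2 := fun w =>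
    (Algebra.trace (ZMod 2) _).toAddMonoidHom.comp
      ((AddMonoidHom.mulRight (N w)).comp (φ ^ 2).toAddMonoidHom)
  have hB : ∀ w x, B w x = trF2 n ((φ ^ 2) x * N w) := fun _ _ => rfl
  let f y := trF2 n (v * (cubicPlusQuadratic n k a (y + u) + cubicPlusQuadratic n k a y))
  have hf : ∀ w x, Δ_[w] f x = Δ_[w] f 0 + B w x := fun w x =>
    (fwdDiff_trF2_mul_add _ u v w x).trans <| by
      rw [trF2_mul_fwdDiff_fwdDiff_fwdDiff_cubicPlusQuadratic, hB]
  have hH : ∀ w, w ∈ N.ker ↔ B w = 0 := fun w => by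
    refine ⟨fun h => AddMonoidHom.ext fun x => ?_, fun h => eq_zero_of_trF2_mul_eq_zero fun y => ?_⟩
    · rw [hB, AddMonoidHom.mem_ker.1 h, mul_zero]
      exact map_zero _
    · obtain ⟨x, rfl⟩ := Finite.surjective_of_injective (φ ^ 2).injective y
      exact DFunLike.congr_fun h x
  obtain ⟨m, -, hm⟩ := (Nat.dvd_prime_pow Nat.prime_two).1
    ((AddSubgroup.card_addSubgroup_dvd_card N.ker).trans (GaloisField.card 2 n hn).dvd)
  have hm4 : 2 ^ m ≤ 2 ^ 4 := by
    rw [← hm, show Nat.card N.ker = Nat.card {w // N w = 0} from rfl, Nat.card_eq_fintype_card,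
      Fintype.card_subtype]
    refine (card_linearizedPoly_ker_le φ 4 _ ?_).trans
      (Nat.pow_le_pow_left (card_fixedPoints_iterateFrobenius_le k hn hk) 4)
    exact mul_ne_zero ((map_ne_zero _).2 hv) ((map_ne_zero _).2 hu)
  refine ⟨m, (Nat.pow_le_pow_iff_right (by norm_num)).1 hm4, ?_⟩
  rw [two_mul_dlct_eq_sum_signChar hn]
  have := sq_sum_signChar_eq_zero_or f B N.ker hf hH
  rwa [hm, card_galoisField_two hn, Nat.cast_pow, Nat.cast_pow, Nat.cast_ofNat] at this

end GaloisField

lemma natAbs_le_of_sq_two_mul {d : ℤ} {n m : ℕ} (hm : m ≤ 4)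
    (h : (2 * d) ^ 2 = 0 ∨ (2 * d) ^ 2 = 2 ^ n * 2 ^ m) :
    (Odd n → d.natAbs ≤ 2 ^ ((n + 1) / 2)) ∧ (Even n → d.natAbs ≤ 2 ^ (n / 2 + 1)) := by
  rcases h with h | h
  · simp only [pow_eq_zero_iff two_ne_zero, mul_eq_zero, two_ne_zero, false_or] at h
    simp [h]
  have hsq : (2 * d.natAbs) ^ 2 = 2 ^ (n + m) := by
    simpa [Int.natAbs_mul, Int.natAbs_pow, pow_add] using congrArg Int.natAbs h
  obtain ⟨j, -, hj⟩ := (Nat.dvd_prime_pow Nat.prime_two).1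
    ⟨4 * d.natAbs, by rw [← hsq]; ring⟩
  have hexp : 2 * j + 2 = n + m := by
    refine Nat.pow_right_injective (le_refl 2) ?_
    simp only [← hsq, hj]
    ring
  rw [hj, Nat.odd_iff, Nat.even_iff]
  exact ⟨fun _ => Nat.pow_le_pow_right two_pos (by omega),
    fun _ => Nat.pow_le_pow_right two_pos (by omega)⟩

theorem stmt8_general (n k : ℕ) (hn : 0 < n) (he : Nat.gcd k n = 1)
    (a : ℕ → ℕ → GaloisField 2 n) :
    (Odd n →
      dlu n (fun x : GaloisField 2 n =>
          x ^ (2 ^ (2 * k) + 2 ^ k + 1) +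
            ∑ p ∈ (Finset.range n ×ˢ Finset.range n).filter (fun p => p.1 < p.2),
              a p.1 p.2 * x ^ (2 ^ p.1 + 2 ^ p.2)) ≤
        2 ^ ((n + 1) / 2)) ∧
    (Even n →
      dlu n (fun x : GaloisField 2 n =>
          x ^ (2 ^ (2 * k) + 2 ^ k + 1) +
            ∑ p ∈ (Finset.range n ×ˢ Finset.range n).filter (fun p => p.1 < p.2),
              a p.1 p.2 * x ^ (2 ^ p.1 + 2 ^ p.2)) ≤
        2 ^ (n / 2 + 1)) := by
  have hbound : ∀ p ∈ univ.filter fun p : GaloisField 2 n × GaloisField 2 n => p.1 ≠ 0 ∧ p.2 ≠ 0,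
      (Odd n → (dlct n (cubicPlusQuadratic n k a) p.1 p.2).natAbs ≤ 2 ^ ((n + 1) / 2)) ∧
      (Even n → (dlct n (cubicPlusQuadratic n k a) p.1 p.2).natAbs ≤ 2 ^ (n / 2 + 1)) := by
    intro p hp
    obtain ⟨hu, hv⟩ := (mem_filter.1 hp).2
    obtain ⟨m, hm, h⟩ := exists_sq_two_mul_dlct_cubicPlusQuadratic k hn.ne' he a hu hv
    exact natAbs_le_of_sq_two_mul hm h
  exact ⟨fun h => Finset.sup_le fun p hp => (hbound p hp).1 h,
    fun h => Finset.sup_le fun p hp => (hbound p hp).2 h⟩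

/-- Corollary: for `G(x) = x^{2^{2k}+2^k+1} + Σ_{0 ≤ i < j ≤ n-1} a_{ij} x^{2^i+2^j}` on
`F_{2^n}` with `gcd(k,n) = 1`, `DLU_G ≤ 2^{(n+1)/2}` if `n` is odd and
`DLU_G ≤ 2^{n/2+1}` if `n` is even. -/
theorem stmt8 (n k : ℕ) (hn : 0 < n) (hk : 0 < k) (he : Nat.gcd k n = 1)
    (a : ℕ → ℕ → GaloisField 2 n) :
    (Odd n →
      dlu n (fun x : GaloisField 2 n =>
          x ^ (2 ^ (2 * k) + 2 ^ k + 1) +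
            ∑ p ∈ (Finset.range n ×ˢ Finset.range n).filter (fun p => p.1 < p.2),
              a p.1 p.2 * x ^ (2 ^ p.1 + 2 ^ p.2)) ≤
        2 ^ ((n + 1) / 2)) ∧
    (Even n →
      dlu n (fun x : GaloisField 2 n =>
          x ^ (2 ^ (2 * k) + 2 ^ k + 1) +
            ∑ p ∈ (Finset.range n ×ˢ Finset.range n).filter (fun p => p.1 < p.2),
              a p.1 p.2 * x ^ (2 ^ p.1 + 2 ^ p.2)) ≤
        2 ^ (n / 2 + 1)) :=
  stmt8_general n k hn he a
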